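/- Let A be a finite-dimensional evolution algebra over a field F of characteristic ≠ 2. Then A is an associative nil algebra if and only if x³ = 0 for every x ∈ A (where x² = x·x and x³ = x²·x). Moreover, in this case A³ = 0, where A¹ = A and A^{k+1} is the linear span of all products u·v with u ∈ A^k and v ∈ A. -/

import Mathlib

/-!
Everything follows from the identity `(A·A)·A = 0`. With respect to a natural basis, `A·A` is
spanned by the squares `eᵢ²`, so `(A·A)·A = 0` amounts to `eᵢ² eⱼ = 0` for all `i, j`.
Polarizing `x³ = 0` at `eᵢ ± eⱼ` gives `2 eᵢ² eⱼ = 0`. Conversely, associativity gives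
`eᵢ² eⱼ = eᵢ (eᵢ eⱼ) = 0` for `i ≠ j`, while `eᵢ³ = c eᵢ²` with `c` the `i`-th coordinate of `eᵢ²`,
so the principal powers of `eᵢ` are `c^k eᵢ²` and nilpotency of `eᵢ` forces `eᵢ³ = 0`.
-/

/-- Principal powers: `ppow m a k = a^(k+1)`, i.e. `ppow m a 0 = a¹ = a` and
`ppow m a (k+1) = a^(k+1) · a`. -/
def ppow {F A : Type*} [Field F] [AddCommGroup A] [Module F A]
    (m : A →ₗ[F] A →ₗ[F] A) (a : A) : ℕ → A
  | 0 => a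
  | k + 1 => m (ppow m a k) a

/-- Plenary subspace powers: `spow m k = A^(k+1)`, i.e. `spow m 0 = A¹ = A` and
`spow m (k+1) = span {u·v : u ∈ A^(k+1), v ∈ A}`. -/
def spow {F A : Type*} [Field F] [AddCommGroup A] [Module F A]
    (m : A →ₗ[F] A →ₗ[F] A) : ℕ → Submodule F A
  | 0 => ⊤
  | k + 1 => Submodule.span F {x | ∃ u ∈ spow m k, ∃ v : A, x = m u v}

section EvolutionAlgebra

variable {F A ι : Type*} [Field F] [AddCommGroup A] [Module F A] (m : A →ₗ[F] A →ₗ[F] A)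

theorem ppow_succ_eq_pow_smul {a : A} {c : F} (h : m (m a a) a = c • m a a) (k : ℕ) :
    ppow m a (k + 1) = c ^ k • m a a := by
  induction k with
  | zero => simp [ppow]
  | succ k ih => rw [ppow, ih, map_smul, LinearMap.smul_apply, h, smul_smul, ← pow_succ]

theorem mul_self_mul_eq_zero_of_nil {a : A} {c : F} (h : m (m a a) a = c • m a a)
    (hnil : ∃ k, ppow m a k = 0) : m (m a a) a = 0 := by
  obtain ⟨_ | k, hk⟩ := hnil
  · simp [show a = 0 from hk]
  · rw [ppow_succ_eq_pow_smul m h] at hk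
    rcases smul_eq_zero.mp hk with hc | hsq
    · rw [h, pow_eq_zero_iff'.mp hc |>.1, zero_smul]
    · rw [h, hsq, smul_zero]

theorem spow_two_eq_bot (h : ∀ u v w : A, m (m u v) w = 0) : spow m 2 = ⊥ := by
  have hker : spow m 1 ≤ LinearMap.ker m := by
    refine Submodule.span_le.mpr ?_
    rintro _ ⟨u, -, v, rfl⟩
    exact LinearMap.ext (h u v)
  refine Submodule.span_eq_bot.mpr ?_
  rintro _ ⟨u, hu, v, rfl⟩
  rw [LinearMap.mem_ker.mp (hker hu), LinearMap.zero_apply]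

def IsNaturalBasis (e : Module.Basis ι F A) : Prop :=
  ∀ i j, i ≠ j → m (e i) (e j) = 0

namespace IsNaturalBasis

variable {m} {e : Module.Basis ι F A}

theorem mul_basis (he : IsNaturalBasis m e) (x : A) (i : ι) :
    m x (e i) = e.repr x i • m (e i) (e i) := by
  classical
  suffices m.flip (e i) = (e.coord i).smulRight (m (e i) (e i)) from LinearMap.congr_fun this x
  refine e.ext fun k => ?_
  by_cases hki : k = i
  · simp [hki]
  · simp [he k i hki, Finsupp.single_eq_of_ne' hki]

theorem mul_mul_eq_zero (he : IsNaturalBasis m e)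
    (hsq : ∀ i j, m (m (e i) (e i)) (e j) = 0) (u v w : A) : m (m u v) w = 0 := by
  suffices m.compr₂ m = 0 from LinearMap.congr_fun (LinearMap.congr_fun₂ this u v) w
  refine LinearMap.ext_basis e e fun i j => ?_
  by_cases hij : i = j
  · subst hij
    exact e.ext fun k => hsq i k
  · simp [he i j hij]

theorem sq_mul_eq_zero_of_cube_eq_zero (he : IsNaturalBasis m e) (h2 : (2 : F) ≠ 0)
    (hcube : ∀ x : A, m (m x x) x = 0) (i j : ι) : m (m (e i) (e i)) (e j) = 0 := by
  by_cases hij : i = j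
  · subst hij
    exact hcube (e i)
  have hplus := hcube (e i + e j)
  have hminus := hcube (e i - e j)
  simp only [map_add, map_sub, map_neg, LinearMap.add_apply, LinearMap.sub_apply,
    LinearMap.neg_apply, he i j hij, he j i (Ne.symm hij), hcube, add_zero, zero_add, sub_zero,
    zero_sub, neg_zero, neg_neg] at hplus hminus
  rw [sub_eq_zero.mp hminus, ← two_smul F] at hplus
  exact (smul_eq_zero.mp hplus).resolve_left h2

theorem sq_mul_eq_zero_of_assoc_of_nil (he : IsNaturalBasis m e)
    (hassoc : ∀ x y z : A, m (m x y) z = m x (m y z)) (hnil : ∀ a : A, ∃ k, ppow m a k = 0)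
    (i j : ι) : m (m (e i) (e i)) (e j) = 0 := by
  by_cases hij : i = j
  · subst hij
    exact mul_self_mul_eq_zero_of_nil m (he.mul_basis _ i) (hnil (e i))
  · rw [hassoc, he i j hij, map_zero]

end IsNaturalBasis

end EvolutionAlgebra

theorem evolution_algebra_assoc_nil_iff_cube_zero
    (F : Type*) [Field F] (h2 : (2 : F) ≠ 0)
    (A : Type*) [AddCommGroup A] [Module F A]
    (m : A →ₗ[F] A →ₗ[F] A) (hcomm : ∀ x y : A, m x y = m y x)
    (n : ℕ) (e : Module.Basis (Fin n) F A)
    (hnat : ∀ i j : Fin n, i ≠ j → m (e i) (e j) = 0) :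
    (((∀ x y z : A, m (m x y) z = m x (m y z)) ∧ (∀ a : A, ∃ k : ℕ, ppow m a k = 0)) ↔
      (∀ x : A, ppow m x 2 = 0)) ∧
    ((∀ x : A, ppow m x 2 = 0) → spow m 2 = ⊥) := by
  have he : IsNaturalBasis m e := hnat
  have cube_zero_imp : (∀ x : A, ppow m x 2 = 0) → ∀ u v w : A, m (m u v) w = 0 :=
    fun hcube => he.mul_mul_eq_zero (he.sq_mul_eq_zero_of_cube_eq_zero h2 hcube)
  refine ⟨⟨fun ⟨hassoc, hnil⟩ x => ?_, fun hcube => ⟨fun x y z => ?_, fun a => ⟨2, hcube a⟩⟩⟩,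
    fun hcube => spow_two_eq_bot m (cube_zero_imp hcube)⟩
  · exact he.mul_mul_eq_zero (he.sq_mul_eq_zero_of_assoc_of_nil hassoc hnil) x x x
  · rw [cube_zero_imp hcube x y z, hcomm x, cube_zero_imp hcube y z x]
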